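/- Dual metric of Kerr–de Sitter in Boyer–Lindquist coordinates: for all (r,θ) with r > r_C, μ(r) ≠ 0 and sin θ ≠ 0, the matrix G(r,θ) defined below satisfies G(r,θ) · g_BL(r,θ) = Id₄, where G is the symmetric 4×4 matrix indexed by (t,r,φ,θ) with ρ²·G_{rr} = μ(r), ρ²·G_{θθ} = c(θ), ρ²·G_{tt} = b²a²sin²θ/c(θ) − b²(r²+a²)²/μ(r), ρ²·G_{tφ} = b²a/c(θ) − b²a(r²+a²)/μ(r), ρ²·G_{φφ} = b²/(c(θ)sin²θ) − b²a²/μ(r), and all other entries zero. -/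

import Mathlib

/-!
Multiplying out `G · g_BL` entry by entry is a rational-function identity in `r`, `a`, `sin²θ`
(after `cos²θ = 1 − sin²θ`), valid as soon as no denominator vanishes: `μ(r)`, `sin θ`, `b`,
`c(θ)` and `ρ²`. Since `Λ > 0`, `b` and `c(θ)` are positive, and `ρ² > 0` once `r ≠ 0`.
This last condition follows from `r > r_C ≥ 0`: `μ` has no cubic term, so its four roots sum
to zero. A negative root `x` of `μ` has `Λx² > 3` and a positive one `Λx² < 3`, while a
negative `r_C` would force `r_c > |r_C|` through the root sum.
-/

open Set Matrix

noncomputable section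

namespace KdSDual

/-- The horizon quartic `μ(r) = (r² + a²)(1 − Λr²/3) − 2mr`. -/
def mu (a m Λ r : ℝ) : ℝ := (r ^ 2 + a ^ 2) * (1 - Λ * r ^ 2 / 3) - 2 * m * r

/-- `b = 1 + Λa²/3`. -/
def bc (a Λ : ℝ) : ℝ := 1 + Λ * a ^ 2 / 3

/-- `c(θ) = 1 + (Λa²/3)cos²θ`. -/
def cth (a Λ θ : ℝ) : ℝ := 1 + Λ * a ^ 2 / 3 * Real.cos θ ^ 2

/-- `ρ²(r,θ) = r² + a²cos²θ`. -/
def rhosq (a r θ : ℝ) : ℝ := r ^ 2 + a ^ 2 * Real.cos θ ^ 2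

/-- The Kerr–de Sitter metric in Boyer–Lindquist coordinates `(t, r, φ, θ)`. -/
def gBL (a m Λ r θ : ℝ) : Matrix (Fin 4) (Fin 4) ℝ :=
  !![(a ^ 2 * cth a Λ θ * Real.sin θ ^ 2 - mu a m Λ r) / (bc a Λ ^ 2 * rhosq a r θ), 0,
       a * Real.sin θ ^ 2 * (mu a m Λ r - cth a Λ θ * (r ^ 2 + a ^ 2)) /
         (bc a Λ ^ 2 * rhosq a r θ), 0;
     0, rhosq a r θ / mu a m Λ r, 0, 0;
     a * Real.sin θ ^ 2 * (mu a m Λ r - cth a Λ θ * (r ^ 2 + a ^ 2)) /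
       (bc a Λ ^ 2 * rhosq a r θ), 0,
       Real.sin θ ^ 2 * (cth a Λ θ * (r ^ 2 + a ^ 2) ^ 2 -
         mu a m Λ r * a ^ 2 * Real.sin θ ^ 2) / (bc a Λ ^ 2 * rhosq a r θ), 0;
     0, 0, 0, rhosq a r θ / cth a Λ θ]

/-- The dual (inverse) Kerr–de Sitter metric in Boyer–Lindquist coordinates:
`ρ²G_rr = μ`, `ρ²G_θθ = c`, `ρ²G_tt = b²a²sin²θ/c − b²(r²+a²)²/μ`,
`ρ²G_tφ = b²a/c − b²a(r²+a²)/μ`, `ρ²G_φφ = b²/(c sin²θ) − b²a²/μ`. -/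
def Gdual (a m Λ r θ : ℝ) : Matrix (Fin 4) (Fin 4) ℝ :=
  !![(bc a Λ ^ 2 * a ^ 2 * Real.sin θ ^ 2 / cth a Λ θ -
        bc a Λ ^ 2 * (r ^ 2 + a ^ 2) ^ 2 / mu a m Λ r) / rhosq a r θ, 0,
       (bc a Λ ^ 2 * a / cth a Λ θ -
         bc a Λ ^ 2 * a * (r ^ 2 + a ^ 2) / mu a m Λ r) / rhosq a r θ, 0;
     0, mu a m Λ r / rhosq a r θ, 0, 0;
     (bc a Λ ^ 2 * a / cth a Λ θ -
       bc a Λ ^ 2 * a * (r ^ 2 + a ^ 2) / mu a m Λ r) / rhosq a r θ, 0,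
       (bc a Λ ^ 2 / (cth a Λ θ * Real.sin θ ^ 2) -
         bc a Λ ^ 2 * a ^ 2 / mu a m Λ r) / rhosq a r θ, 0;
     0, 0, 0, cth a Λ θ / rhosq a r θ]

end KdSDual

open KdSDual

namespace KdSDual

theorem sum_eq_zero_of_quartic_roots {p q s t x y z w : ℝ} (hp : p ≠ 0)
    (hxy : x ≠ y) (hxz : x ≠ z) (hxw : x ≠ w) (hyz : y ≠ z) (hyw : y ≠ w) (hzw : z ≠ w)
    (hx : p * x ^ 4 + q * x ^ 2 + s * x + t = 0) (hy : p * y ^ 4 + q * y ^ 2 + s * y + t = 0)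
    (hz : p * z ^ 4 + q * z ^ 2 + s * z + t = 0) (hw : p * w ^ 4 + q * w ^ 2 + s * w + t = 0) :
    x + y + z + w = 0 := by
  have hV : (x - y) * (x - z) * (x - w) * (y - z) * (y - w) * (z - w) ≠ 0 := by
    simp only [mul_ne_zero_iff, sub_ne_zero]; tauto
  -- `p (x + y + z + w)` is the third divided difference of the quartic, which has no cubic term.
  have key :
      (x - y) * (x - z) * (x - w) * (y - z) * (y - w) * (z - w) * (p * (x + y + z + w)) = 0 := by
    linear_combination (y - z) * (y - w) * (z - w) * hx - (x - z) * (x - w) * (z - w) * hy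
      + (x - y) * (x - w) * (y - w) * hz - (x - y) * (x - z) * (y - z) * hw
  simpa [hV, hp] using key

theorem mu_eq_quartic (a m Λ x : ℝ) :
    mu a m Λ x = -(Λ / 3) * x ^ 4 + (1 - Λ * a ^ 2 / 3) * x ^ 2 + -(2 * m) * x + a ^ 2 := by
  unfold mu; ring

theorem sum_eq_zero_of_mu_roots {a m Λ x y z w : ℝ} (hΛ : Λ ≠ 0)
    (hxy : x < y) (hyz : y < z) (hzw : z < w) (hx : mu a m Λ x = 0) (hy : mu a m Λ y = 0)
    (hz : mu a m Λ z = 0) (hw : mu a m Λ w = 0) : x + y + z + w = 0 := by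
  rw [mu_eq_quartic] at hx hy hz hw
  exact sum_eq_zero_of_quartic_roots (neg_ne_zero.2 (div_ne_zero hΛ three_ne_zero)) hxy.ne
    (hxy.trans hyz).ne (hxy.trans (hyz.trans hzw)).ne hyz.ne (hyz.trans hzw).ne hzw.ne hx hy hz hw

theorem three_lt_mul_sq_of_mu_eq_zero_of_neg {a m Λ x : ℝ} (hm : 0 < m) (hx : x < 0)
    (h : mu a m Λ x = 0) : 3 < Λ * x ^ 2 := by
  unfold mu at h
  nlinarith [mul_pos hm (neg_pos.2 hx), sq_nonneg a, sq_pos_of_neg hx]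

theorem mul_sq_lt_three_of_mu_eq_zero_of_pos {a m Λ x : ℝ} (hm : 0 < m) (hx : 0 < x)
    (h : mu a m Λ x = 0) : Λ * x ^ 2 < 3 := by
  unfold mu at h
  nlinarith [mul_pos hm hx, sq_nonneg a, sq_pos_of_pos hx]

theorem nonneg_of_mu_roots {a m Λ r0 rC re rc : ℝ} (hm : 0 < m) (hΛ : 0 < Λ)
    (h01 : r0 < rC) (h12 : rC < re) (h23 : re < rc)
    (hroot0 : mu a m Λ r0 = 0) (hrootC : mu a m Λ rC = 0)
    (hroote : mu a m Λ re = 0) (hrootc : mu a m Λ rc = 0) : 0 ≤ rC := by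
  by_contra! hneg
  have hsum := sum_eq_zero_of_mu_roots hΛ.ne' h01 h12 h23 hroot0 hrootC hroote hrootc
  have hrc : -rC < rc := by linarith
  have hsq : Λ * rC ^ 2 < Λ * rc ^ 2 := mul_lt_mul_of_pos_left (by nlinarith) hΛ
  linarith [three_lt_mul_sq_of_mu_eq_zero_of_neg hm hneg hrootC,
    mul_sq_lt_three_of_mu_eq_zero_of_pos hm (by linarith) hrootc]

theorem bc_pos {a Λ : ℝ} (hΛ : 0 ≤ Λ) : 0 < bc a Λ := by
  unfold bc; positivity

theorem cth_pos {a Λ : ℝ} (hΛ : 0 ≤ Λ) (θ : ℝ) : 0 < cth a Λ θ := by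
  unfold cth; positivity

theorem rhosq_pos {r : ℝ} (hr : r ≠ 0) (a θ : ℝ) : 0 < rhosq a r θ := by
  unfold rhosq; positivity

theorem Gdual_mul_gBL {a m Λ r θ : ℝ} (hμ : mu a m Λ r ≠ 0) (hs : Real.sin θ ≠ 0)
    (hb : bc a Λ ≠ 0) (hc : cth a Λ θ ≠ 0) (hρ : rhosq a r θ ≠ 0) :
    Gdual a m Λ r θ * gBL a m Λ r θ = 1 := by
  have hρ' : rhosq a r θ = r ^ 2 + a ^ 2 - a ^ 2 * Real.sin θ ^ 2 := by
    rw [rhosq, Real.cos_sq']; ring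
  ext i j
  fin_cases i <;> fin_cases j <;>
    simp only [Gdual, gBL, Matrix.mul_apply, Fin.sum_univ_four, of_apply, cons_val, cons_val',
      cons_val_zero, cons_val_one, cons_val_fin_one, one_apply_eq, one_apply_ne, ne_eq,
      Fin.reduceEq, not_false_eq_true, zero_mul, mul_zero, add_zero, zero_add, Fin.isValue,
      Fin.mk_one, Fin.zero_eta, Fin.reduceFinMk] <;>
    field_simp <;> rw [hρ'] <;> ring

end KdSDual

theorem kds_dual_metric (a m Λ r0 rC re rc : ℝ) (hm : 0 < m) (hΛ : 0 < Λ)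
    (h01 : r0 < rC) (h12 : rC < re) (h23 : re < rc)
    (hroot0 : mu a m Λ r0 = 0) (hrootC : mu a m Λ rC = 0)
    (hroote : mu a m Λ re = 0) (hrootc : mu a m Λ rc = 0) :
    ∀ r θ : ℝ, rC < r → mu a m Λ r ≠ 0 → Real.sin θ ≠ 0 →
      Gdual a m Λ r θ * gBL a m Λ r θ = 1 := by
  intro r θ hr hμ hs
  have hr0 : 0 < r :=
    (nonneg_of_mu_roots hm hΛ h01 h12 h23 hroot0 hrootC hroote hrootc).trans_lt hr
  exact Gdual_mul_gBL hμ hs (bc_pos hΛ.le).ne' (cth_pos hΛ.le θ).ne'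
    (rhosq_pos hr0.ne' a θ).ne'
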